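/- For κ ∈ I_n, define η(κ)(i) := ((n,κ(n))∘(n−1,κ(n−1))∘⋯∘(i,κ(i)))(i). Then for each i ∈ {1,…,n}, κ(i) = i if and only if η(κ)(i) = i; in particular the set {i : i < κ(i)} equals the set {i : i < η(κ)(i)}, so the coefficients α(κ) := ∏_{i : i<κ(i)} (n−2u−2+i)⁻¹ and α(η(κ)) coincide. -/

import Mathlib

/-!
STATEMENT 16: For κ ∈ I_n and η(κ)(i) := ((n,κ(n))∘⋯∘(i,κ(i)))(i):
κ(i) = i ↔ η(κ)(i) = i for each i; hence {i : i < κ(i)} = {i : i < η(κ)(i)}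
and α(κ) = α(η(κ)), where α(κ) = ∏_{i : i < κ(i)} (n−2u−2+i)⁻¹ in K = RatFunc ℚ.
The point `i : Fin n` carries the label `i+1 ∈ {1,…,n}`.
-/

noncomputable section

abbrev K : Type := RatFunc ℚ

def u : K := RatFunc.X

/-- q_κ^{[i]} = (n,κ(n))∘(n−1,κ(n−1))∘⋯∘(i,κ(i)), rightmost factor applied first. -/
def qk {n : ℕ} (κ : Fin n → Fin n) (i : Fin n) : Equiv.Perm (Fin n) :=
  ((((List.finRange n).filter (fun j => decide (i ≤ j))).reverse).map
    (fun j => Equiv.swap j (κ j))).prod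

/-- η(κ)(i) = ((n,κ(n))∘⋯∘(i,κ(i)))(i). -/
def etaMap {n : ℕ} (κ : Fin n → Fin n) : Fin n → Fin n :=
  fun i => qk κ i i

/-- α(κ) = ∏_{i : i < κ(i)} (n−2u−2+i)⁻¹, with label i+1. -/
def alphaK {n : ℕ} (κ : Fin n → Fin n) : K :=
  ∏ i ∈ Finset.univ.filter (fun i => i < κ i), ((n : K) - 2 * u - 2 + ((i : ℕ) + 1 : K))⁻¹

/-! Peeling off the rightmost factor, `q_κ^{[i]} = Q ∘ (i, κ(i))` where `Q` is the product of the
transpositions `(j, κ(j))` with `j > i`. Since `j ≤ κ(j)`, each of these fixes every point `≤ i`, so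
`Q` fixes `{x | x ≤ i}` pointwise and therefore maps `{x | i < x}` onto itself. Hence
`η(κ)(i) = Q(κ(i))` equals `i` exactly when `κ(i) = i`, and exceeds `i` exactly when `κ(i)` does. -/

theorem List.eq_cons_of_pairwise_lt_of_forall_le {α : Type*} [Preorder α] {l : List α}
    (hl : l.Pairwise (· < ·)) {i : α} (hi : i ∈ l) (hmin : ∀ j ∈ l, i ≤ j) :
    ∃ t, l = i :: t ∧ ∀ j ∈ t, i < j := by
  obtain _ | ⟨a, t⟩ := l
  · simp at hi
  obtain ⟨ha, -⟩ := List.pairwise_cons.mp hl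
  have hai : a = i := by
    rcases List.mem_cons.mp hi with rfl | hit
    · rfl
    · exact absurd (hmin a List.mem_cons_self) (ha i hit).not_ge
  subst hai
  exact ⟨t, rfl, ha⟩

theorem Equiv.Perm.list_prod_apply_eq_self {α : Type*} {l : List (Equiv.Perm α)} {x : α}
    (h : ∀ σ ∈ l, σ x = x) : l.prod x = x :=
  MulAction.mem_stabilizer_iff.mp <|
    Subgroup.list_prod_mem _ fun σ hσ => MulAction.mem_stabilizer_iff.mpr (h σ hσ)

theorem Equiv.Perm.lt_apply_iff_of_forall_le {α : Type*} [LinearOrder α] (σ : Equiv.Perm α)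
    {i : α} (hσ : ∀ x ≤ i, σ x = x) (x : α) : i < σ x ↔ i < x := by
  rcases le_or_gt x i with hx | hx
  · rw [hσ x hx]
  · refine iff_of_true (lt_of_not_ge fun hσx => hx.not_ge ?_) hx
    rw [← σ.injective (hσ _ hσx)]
    exact hσx

variable {n : ℕ} {κ : Fin n → Fin n}

theorem exists_etaMap_eq_apply (hκ : ∀ i, i ≤ κ i) (i : Fin n) :
    ∃ Q : Equiv.Perm (Fin n), (∀ x ≤ i, Q x = x) ∧ etaMap κ i = Q (κ i) := by
  obtain ⟨t, ht, hit⟩ := List.eq_cons_of_pairwise_lt_of_forall_le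
    ((List.pairwise_lt_finRange n).filter (fun j => decide (i ≤ j)))
    (i := i) (by simp) (fun j hj => by simpa using (List.mem_filter.mp hj).2)
  refine ⟨(t.reverse.map fun j => Equiv.swap j (κ j)).prod, fun x hx => ?_, ?_⟩
  · refine Equiv.Perm.list_prod_apply_eq_self fun σ hσ => ?_
    obtain ⟨j, hj, rfl⟩ := List.mem_map.mp hσ
    have hxj : x < j := hx.trans_lt (hit j (List.mem_reverse.mp hj))
    exact Equiv.swap_apply_of_ne_of_ne hxj.ne (hxj.trans_le (hκ j)).ne
  · simp [etaMap, qk, ht]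

theorem etaMap_eq_self_iff (hκ : ∀ i, i ≤ κ i) (i : Fin n) : etaMap κ i = i ↔ κ i = i := by
  obtain ⟨Q, hQ, hη⟩ := exists_etaMap_eq_apply hκ i
  have hQi : Q i = i := hQ i le_rfl
  rw [hη]
  exact ⟨fun h => Q.injective (h.trans hQi.symm), fun h => by rw [h, hQi]⟩

theorem lt_etaMap_iff (hκ : ∀ i, i ≤ κ i) (i : Fin n) : i < etaMap κ i ↔ i < κ i := by
  obtain ⟨Q, hQ, hη⟩ := exists_etaMap_eq_apply hκ i
  rw [hη, Q.lt_apply_iff_of_forall_le hQ]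

theorem etaMap_fixed_points (n : ℕ) (κ : Fin n → Fin n) (hκ : ∀ i, i ≤ κ i) :
    (∀ i, κ i = i ↔ etaMap κ i = i) ∧
    Finset.univ.filter (fun i => i < κ i) =
      Finset.univ.filter (fun i => i < etaMap κ i) ∧
    alphaK κ = alphaK (etaMap κ) := by
  have hfilter : Finset.univ.filter (fun i => i < κ i) =
      Finset.univ.filter (fun i => i < etaMap κ i) :=
    Finset.filter_congr fun i _ => (lt_etaMap_iff hκ i).symm
  refine ⟨fun i => (etaMap_eq_self_iff hκ i).symm, hfilter, ?_⟩
  rw [alphaK, alphaK, hfilter]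

end
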